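/- Let x_1, …, x_t ∈ 𝒳 be a data stream and for each i ∈ {1,…,t} and k ∈ {1,…,w} let x_i^k ∈ 𝒳 be the k-th perturbed instance of x_i. Then, without any constraint on the perturbation sizes and without assuming ψ is concave or monotone, the overall smoothed performances on the clean windows W_i and the corrupted windows W'_i satisfy |Z̃ − Z̃'| ≤ (1/t) Σ_{i=1}^t Σ_{k=1}^w ψ(d(x_i, x_i^k)). -/

import Mathlib

/-!
Each smoothed performance integrates a `[0,1]`-valued function against a product of smoothing
distributions. For a single factor, the layer-cake formula `∫ g dμ = ∫₀¹ μ {g > s} ds` bounds the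
change of the integral by the total variation distance; replacing the factors one at a time
(a hybrid argument) bounds the change for the product by the sum of the coordinatewise distances.
Summed over time, the pair `(x_m, x_m^k)` is met at most once, at time `m + k - 1`; the pairs
never met are dropped, as `ψ(d(·,·)) ≥ TV ≥ 0`.
-/

open MeasureTheory

/-- Total variation distance between two measures:
`TV(μ, ν) = sup over measurable sets A of |μ(A) − ν(A)|`. -/
noncomputable def tvDist {X : Type*} [MeasurableSpace X] (μ ν : Measure X) : ℝ :=
  ⨆ A : {A : Set X // MeasurableSet A}, |(μ A.1).toReal - (ν A.1).toReal|

/-- The smoothed performance: the integral of `f` against the product of the smoothing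
distributions `S` applied to the entries of the window `W`. -/
noncomputable def smoothed {X : Type*} [MeasurableSpace X] (S : X → Measure X)
    {s : ℕ} (f : (Fin s → X) → ℝ) (W : Fin s → X) : ℝ :=
  ∫ y, f y ∂(Measure.pi fun j => S (W j))

/-- The clean sliding window at time step `i` over the stream `x`: with `s = min(i, w)`,
the window is `Wᵢ = (x_{i−s+1}, …, x_i)`. -/
def window {X : Type*} (x : ℕ → X) (w i : ℕ) : Fin (min i w) → X :=
  fun j => x (i - min i w + 1 + (j : ℕ))

/-- The adversarially corrupted sliding window at time step `i`: with `s = min(i, w)`,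
the window is `W'ᵢ = (x_{i−s+1}^{s}, x_{i−s+2}^{s−1}, …, x_i^{1})`, where `xa j k` is the
`k`-th perturbed instance of `x_j`. -/
def windowAdv {X : Type*} (xa : ℕ → ℕ → X) (w i : ℕ) : Fin (min i w) → X :=
  fun j => xa (i - min i w + 1 + (j : ℕ)) (min i w - (j : ℕ))

open Finset

section TotalVariation

variable {X : Type*} [MeasurableSpace X] {μ ν : Measure X}

theorem tvDist_nonneg : 0 ≤ tvDist μ ν :=
  Real.iSup_nonneg fun _ => abs_nonneg _

theorem integral_eq_integral_Ioc_measureReal_lt [IsFiniteMeasure μ] {g : X → ℝ}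
    (hg : Measurable g) (hg01 : ∀ x, g x ∈ Set.Icc (0 : ℝ) 1) :
    ∫ x, g x ∂μ = ∫ s in Set.Ioc (0 : ℝ) 1, μ.real {x | s < g x} := by
  rw [(Integrable.of_mem_Icc 0 1 hg.aemeasurable (ae_of_all _ hg01)).integral_eq_integral_meas_lt
    (ae_of_all _ fun x => (hg01 x).1)]
  refine setIntegral_eq_of_subset_of_forall_sdiff_eq_zero measurableSet_Ioi Set.Ioc_subset_Ioi_self
    fun s hs => ?_
  have hs1 : 1 < s := by simpa using hs
  have hempty : {x | s < g x} = ∅ :=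
    Set.eq_empty_of_forall_notMem fun x hx => (hg01 x).2.not_gt (hs1.trans hx)
  simp [hempty]

theorem integrableOn_Ioc_measureReal_lt [IsFiniteMeasure μ] (g : X → ℝ) :
    IntegrableOn (fun s => μ.real {x | s < g x}) (Set.Ioc (0 : ℝ) 1) := by
  have hanti : Antitone fun s => μ.real {x | s < g x} := fun s s' hss' =>
    measureReal_mono fun x hx => hss'.trans_lt hx
  exact ((hanti.antitoneOn _).integrableOn_isCompact isCompact_Icc).mono_set
    Set.Ioc_subset_Icc_self

variable [IsProbabilityMeasure μ] [IsProbabilityMeasure ν]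

theorem abs_measureReal_sub_le_tvDist {A : Set X} (hA : MeasurableSet A) :
    |μ.real A - ν.real A| ≤ tvDist μ ν := by
  refine le_ciSup (f := fun A : {A : Set X // MeasurableSet A} => |μ.real A - ν.real A|)
    ⟨1, ?_⟩ ⟨A, hA⟩
  rintro _ ⟨B, rfl⟩
  exact abs_sub_le_iff.2 ⟨(sub_le_self _ measureReal_nonneg).trans measureReal_le_one,
    (sub_le_self _ measureReal_nonneg).trans measureReal_le_one⟩

theorem abs_integral_sub_le_tvDist {g : X → ℝ} (hg : Measurable g)
    (hg01 : ∀ x, g x ∈ Set.Icc (0 : ℝ) 1) :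
    |∫ x, g x ∂μ - ∫ x, g x ∂ν| ≤ tvDist μ ν := by
  rw [integral_eq_integral_Ioc_measureReal_lt hg hg01,
    integral_eq_integral_Ioc_measureReal_lt hg hg01, ← integral_sub (integrableOn_Ioc_measureReal_lt g) (integrableOn_Ioc_measureReal_lt g)]
  have hbound := norm_setIntegral_le_of_norm_le_const (μ := volume) (s := Set.Ioc (0 : ℝ) 1)
    (f := fun s => μ.real {x | s < g x} - ν.real {x | s < g x}) (by simp)
    fun s _ => abs_measureReal_sub_le_tvDist (measurableSet_lt measurable_const hg)
  simpa using hbound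

end TotalVariation

section ProductMeasure

variable {X : Type*} [MeasurableSpace X]

theorem piFinSuccAbove_zero_symm_eq_cons {n : ℕ} :
    ⇑(MeasurableEquiv.piFinSuccAbove (fun _ : Fin (n + 1) => X) 0).symm =
      fun p => Fin.cons p.1 p.2 := by
  funext p
  simp [MeasurableEquiv.piFinSuccAbove_symm_apply, Fin.insertNthEquiv]

theorem measurable_finCons_uncurry {n : ℕ} :
    Measurable fun p : X × (Fin n → X) => (Fin.cons p.1 p.2 : Fin (n + 1) → X) :=
  piFinSuccAbove_zero_symm_eq_cons (X := X) ▸ MeasurableEquiv.measurable _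

theorem integral_pi_fin_succ {n : ℕ} (μ : Fin (n + 1) → Measure X) [∀ j, SigmaFinite (μ j)]
    {f : (Fin (n + 1) → X) → ℝ} (hf : Integrable f (Measure.pi μ)) :
    ∫ y, f y ∂Measure.pi μ =
      ∫ x₀, ∫ y, f (Fin.cons x₀ y) ∂Measure.pi (fun j => μ j.succ) ∂μ 0 := by
  have hmp := (measurePreserving_piFinSuccAbove μ 0).symm
  rw [← hmp.integral_comp', integral_prod]
  · simp only [piFinSuccAbove_zero_symm_eq_cons, Fin.zero_succAbove]
  · exact (hmp.integrable_comp_emb (MeasurableEquiv.measurableEmbedding _)).2 hf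

theorem integral_mem_Icc_zero_one {μ : Measure X} [IsProbabilityMeasure μ] {g : X → ℝ}
    (hg01 : ∀ x, g x ∈ Set.Icc (0 : ℝ) 1) : ∫ x, g x ∂μ ∈ Set.Icc (0 : ℝ) 1 :=
  ⟨integral_nonneg fun x => (hg01 x).1,
    (integral_mono_of_nonneg (ae_of_all _ fun x => (hg01 x).1) (integrable_const 1)
      (ae_of_all _ fun x => (hg01 x).2)).trans (by simp)⟩

theorem abs_integral_pi_sub_le_sum_tvDist {n : ℕ} (μ ν : Fin n → Measure X)
    [∀ j, IsProbabilityMeasure (μ j)] [∀ j, IsProbabilityMeasure (ν j)]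
    {f : (Fin n → X) → ℝ} (hf : Measurable f) (hf01 : ∀ y, f y ∈ Set.Icc (0 : ℝ) 1) :
    |∫ y, f y ∂Measure.pi μ - ∫ y, f y ∂Measure.pi ν| ≤ ∑ j, tvDist (μ j) (ν j) := by
  induction n with
  | zero => simp [Subsingleton.elim μ ν]
  | succ n ih =>
    have hcons : Measurable fun p : X × (Fin n → X) => f (Fin.cons p.1 p.2) :=
      hf.comp measurable_finCons_uncurry
    set gμ := fun x₀ => ∫ y, f (Fin.cons x₀ y) ∂Measure.pi (fun j => μ j.succ)
    set gν := fun x₀ => ∫ y, f (Fin.cons x₀ y) ∂Measure.pi (fun j => ν j.succ)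
    have hgμ : Measurable gμ := hcons.stronglyMeasurable.integral_prod_right'.measurable
    have hgν : Measurable gν := hcons.stronglyMeasurable.integral_prod_right'.measurable
    have hgμ01 (x₀ : X) : gμ x₀ ∈ Set.Icc (0 : ℝ) 1 := integral_mem_Icc_zero_one fun _ => hf01 _
    have hgν01 (x₀ : X) : gν x₀ ∈ Set.Icc (0 : ℝ) 1 := integral_mem_Icc_zero_one fun _ => hf01 _
    have hfirst : |∫ x₀, gμ x₀ ∂μ 0 - ∫ x₀, gν x₀ ∂μ 0| ≤
        ∑ j : Fin n, tvDist (μ j.succ) (ν j.succ) := by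
      rw [← integral_sub (.of_mem_Icc 0 1 hgμ.aemeasurable (ae_of_all _ hgμ01))
        (.of_mem_Icc 0 1 hgν.aemeasurable (ae_of_all _ hgν01))]
      simpa using norm_integral_le_of_norm_le_const (μ := μ 0) (f := fun x₀ => gμ x₀ - gν x₀)
        (ae_of_all _ fun x₀ => ih _ _ (hcons.comp measurable_prodMk_left) fun _ => hf01 _)
    have hf_int (ρ : Fin (n + 1) → Measure X) [∀ j, IsProbabilityMeasure (ρ j)] :
        Integrable f (Measure.pi ρ) :=
      .of_mem_Icc 0 1 hf.aemeasurable (ae_of_all _ hf01)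
    rw [integral_pi_fin_succ μ (hf_int μ), integral_pi_fin_succ ν (hf_int ν), Fin.sum_univ_succ]
    calc |∫ x₀, gμ x₀ ∂μ 0 - ∫ x₀, gν x₀ ∂ν 0|
        ≤ |∫ x₀, gμ x₀ ∂μ 0 - ∫ x₀, gν x₀ ∂μ 0| + |∫ x₀, gν x₀ ∂μ 0 - ∫ x₀, gν x₀ ∂ν 0| :=
          abs_sub_le _ _ _
      _ ≤ ∑ j : Fin n, tvDist (μ j.succ) (ν j.succ) + tvDist (μ 0) (ν 0) :=
          add_le_add hfirst (abs_integral_sub_le_tvDist hgν hgν01)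
      _ = _ := add_comm _ _

end ProductMeasure

theorem sum_sum_window_le_sum_sum {M : Type*} [AddCommMonoid M] [PartialOrder M]
    [IsOrderedAddMonoid M] (T : ℕ → ℕ → M) (hT : ∀ m k, 0 ≤ T m k) (w t : ℕ) :
    ∑ i ∈ Icc 1 t, ∑ j : Fin (min i w), T (i - min i w + 1 + j) (min i w - j) ≤
      ∑ m ∈ Icc 1 t, ∑ k ∈ Icc 1 w, T m k := by
  set A := (Icc 1 t).sigma fun i => range (min i w)
  set e : (_ : ℕ) × ℕ → ℕ × ℕ := fun p => (p.1 - min p.1 w + 1 + p.2, min p.1 w - p.2)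
  have he_inj : Set.InjOn e A := by
    rintro ⟨i, j⟩ hp ⟨i', j'⟩ hq h
    simp only [A, coe_sigma, Set.mem_sigma_iff, coe_Icc, Set.mem_Icc, coe_range, Set.mem_Iio,
      e, Prod.mk.injEq] at hp hq h
    obtain rfl : i = i' := by omega
    obtain rfl : j = j' := by omega
    rfl
  have he_maps : A.image e ⊆ Icc 1 t ×ˢ Icc 1 w := by
    simp only [subset_iff, mem_image, mem_sigma, mem_Icc, mem_range, mem_product, A, e]
    rintro _ ⟨⟨i, j⟩, hp, rfl⟩
    omega
  calc ∑ i ∈ Icc 1 t, ∑ j : Fin (min i w), T (i - min i w + 1 + j) (min i w - j)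
      = ∑ p ∈ A, T (e p).1 (e p).2 := by
        rw [sum_sigma]
        exact sum_congr rfl fun i _ =>
          Fin.sum_univ_eq_sum_range (fun j => T (i - min i w + 1 + j) (min i w - j)) _
    _ = ∑ q ∈ A.image e, T q.1 q.2 := (sum_image (f := fun q => T q.1 q.2) he_inj).symm
    _ ≤ ∑ q ∈ Icc 1 t ×ˢ Icc 1 w, T q.1 q.2 :=
        sum_le_sum_of_subset_of_nonneg he_maps fun q _ _ => hT _ _
    _ = ∑ m ∈ Icc 1 t, ∑ k ∈ Icc 1 w, T m k := sum_product _ _ _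

theorem performance_bound_each_window_unconstrained_general {X : Type*} [MeasurableSpace X]
    (S : X → Measure X) (hS : ∀ x, IsProbabilityMeasure (S x))
    (d : X → X → ℝ)
    (ψ : ℝ → ℝ)
    (hTV : ∀ a b : X, tvDist (S a) (S b) ≤ ψ (d a b))
    (w t : ℕ)
    (f : (i : ℕ) → (Fin (min i w) → X) → ℝ)
    (hf : ∀ i, Measurable (f i))
    (hf01 : ∀ i y, f i y ∈ Set.Icc (0 : ℝ) 1)
    (x : ℕ → X) (xa : ℕ → ℕ → X) :
    |(∑ i ∈ Finset.Icc 1 t, smoothed S (f i) (window x w i)) / (t : ℝ) -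
        (∑ i ∈ Finset.Icc 1 t, smoothed S (f i) (windowAdv xa w i)) / (t : ℝ)| ≤
      (∑ i ∈ Finset.Icc 1 t, ∑ k ∈ Finset.Icc 1 w, ψ (d (x i) (xa i k))) / (t : ℝ) := by
  have hψ_nonneg (a b : X) : 0 ≤ ψ (d a b) := tvDist_nonneg.trans (hTV a b)
  have hwindow (i : ℕ) :
      |smoothed S (f i) (window x w i) - smoothed S (f i) (windowAdv xa w i)| ≤
        ∑ j, ψ (d (window x w i j) (windowAdv xa w i j)) :=
    (abs_integral_pi_sub_le_sum_tvDist _ _ (hf i) (hf01 i)).trans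
      (sum_le_sum fun j _ => hTV _ _)
  rw [div_sub_div_same, abs_div, Nat.abs_cast]
  gcongr
  calc |∑ i ∈ Icc 1 t, smoothed S (f i) (window x w i) -
        ∑ i ∈ Icc 1 t, smoothed S (f i) (windowAdv xa w i)|
      ≤ ∑ i ∈ Icc 1 t, |smoothed S (f i) (window x w i) - smoothed S (f i) (windowAdv xa w i)| := by
        rw [← sum_sub_distrib]
        exact abs_sum_le_sum_abs _ _
    _ ≤ ∑ i ∈ Icc 1 t, ∑ j, ψ (d (window x w i j) (windowAdv xa w i j)) :=
        sum_le_sum fun i _ => hwindow i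
    _ ≤ ∑ i ∈ Icc 1 t, ∑ k ∈ Icc 1 w, ψ (d (x i) (xa i k)) :=
        sum_sum_window_le_sum_sum (fun m k => ψ (d (x m) (xa m k))) (fun _ _ => hψ_nonneg _ _) w t

/-- in the re-attack threat model, without any constraint on the perturbation
sizes and without assuming `ψ` is concave or monotone,
`|Z̃ − Z̃'| ≤ (1/t) ∑_{i=1}^t ∑_{k=1}^w ψ(d(x_i, x_i^k))`. -/
theorem performance_bound_each_window_unconstrained {X : Type*} [MeasurableSpace X]
    (S : X → Measure X) (hS : ∀ x, IsProbabilityMeasure (S x))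
    (d : X → X → ℝ) (hd : ∀ a b, 0 ≤ d a b)
    (ψ : ℝ → ℝ) (hψ01 : ∀ a, 0 ≤ a → ψ a ∈ Set.Icc (0 : ℝ) 1)
    (hTV : ∀ a b : X, tvDist (S a) (S b) ≤ ψ (d a b))
    (w t : ℕ) (hw : 1 ≤ w) (ht : 1 ≤ t)
    (f : (i : ℕ) → (Fin (min i w) → X) → ℝ)
    (hf : ∀ i, Measurable (f i))
    (hf01 : ∀ i y, f i y ∈ Set.Icc (0 : ℝ) 1)
    (x : ℕ → X) (xa : ℕ → ℕ → X) :
    |(∑ i ∈ Finset.Icc 1 t, smoothed S (f i) (window x w i)) / (t : ℝ) -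
        (∑ i ∈ Finset.Icc 1 t, smoothed S (f i) (windowAdv xa w i)) / (t : ℝ)| ≤
      (∑ i ∈ Finset.Icc 1 t, ∑ k ∈ Finset.Icc 1 w, ψ (d (x i) (xa i k))) / (t : ℝ) :=
  performance_bound_each_window_unconstrained_general S hS d ψ hTV w t f hf hf01 x xa
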